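/- Let s and a be nonempty finite types and ι a finite type. Let U : Matrix (s × a) (s × a) ℂ be a unitary matrix, σ : Matrix a a ℂ a density matrix, (E i)_{i : ι} a resolution of the identity on Matrix s s ℂ, and (M i)_{i : ι} a resolution of the identity on Matrix a a ℂ. Assume the probe calibration condition: for every i and every matrix ρ : Matrix s s ℂ, trace ((1 ⊗ M i) * U * (ρ ⊗ σ) * U†) = trace ((E i) * ρ). Then for every i and every ρ, Tr_A ((1 ⊗ M i) * U * (ρ ⊗ σ) * U† * (1 ⊗ M i)) = Tr_A (U * (((E i) * ρ) ⊗ σ) * U†) = Tr_A (U * ((ρ * (E i)) ⊗ σ) * U†) = Tr_A (U * (((E i) * ρ * (E i)) ⊗ σ) * U†). -/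

import Mathlib

open scoped Kronecker ComplexOrder
open Matrix

/-- The partial trace over the second (ancilla) factor. -/
noncomputable def partialTraceA {s a : Type*} [Fintype a]
    (X : Matrix (s × a) (s × a) ℂ) : Matrix s s ℂ :=
  Matrix.of fun i j => ∑ k, X (i, k) (j, k)

/-- Conjugate transpose of a Kronecker product. -/
lemma kron_conjTranspose {s a : Type*} (A : Matrix s s ℂ) (B : Matrix a a ℂ) :
    (A ⊗ₖ B)ᴴ = Aᴴ ⊗ₖ Bᴴ := by
  ext ⟨i, k⟩ ⟨j, l⟩
  simp [conjTranspose_apply, kroneckerMap_apply, star_mul']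

/-- Kronecker product is additive (sum) in the first argument. -/
lemma sum_kron {s a ι : Type*} [Fintype ι] (f : ι → Matrix s s ℂ) (B : Matrix a a ℂ) :
    (∑ j, f j) ⊗ₖ B = ∑ j, (f j ⊗ₖ B) := by
  ext ⟨i, k⟩ ⟨j, l⟩
  simp [kroneckerMap_apply, Matrix.sum_apply, Finset.sum_mul]

/-- A matrix with `trace (Dᴴ * D) = 0` is zero. -/
lemma eq_zero_of_trace_conjTranspose_mul_self {m n : Type*} [Fintype m] [Fintype n]
    {D : Matrix m n ℂ} (h : (Dᴴ * D).trace = 0) : D = 0 := by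
  have key : ∀ j, dotProduct (star (fun i => D i j)) (fun i => D i j) = 0 := by
    have h0 : ∀ j ∈ Finset.univ, (0:ℂ) ≤ dotProduct (star (fun i => D i j)) (fun i => D i j) :=
      fun j _ => dotProduct_star_self_nonneg _
    have hsum : ∑ j, dotProduct (star (fun i => D i j)) (fun i => D i j) = 0 := by
      rw [← h]
      simp [Matrix.trace, Matrix.diag, Matrix.mul_apply, dotProduct, conjTranspose_apply]
    intro j
    exact (Finset.sum_eq_zero_iff_of_nonneg h0).1 hsum j (Finset.mem_univ j)
  ext i j
  exact congr_fun (dotProduct_star_self_eq_zero.1 (key j)) i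

/-- Moving `1 ⊗ₖ B` across the partial trace. -/
lemma partialTraceA_one_kron_mul {s a : Type*} [Fintype s] [Fintype a] [DecidableEq s]
    (B : Matrix a a ℂ) (Y : Matrix (s × a) (s × a) ℂ) :
    partialTraceA (((1 : Matrix s s ℂ) ⊗ₖ B) * Y)
      = partialTraceA (Y * ((1 : Matrix s s ℂ) ⊗ₖ B)) := by
  ext i j
  show (∑ k, (((1 : Matrix s s ℂ) ⊗ₖ B) * Y) (i,k) (j,k))
     = (∑ k, (Y * ((1 : Matrix s s ℂ) ⊗ₖ B)) (i,k) (j,k))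
  have hL : ∀ k, (((1 : Matrix s s ℂ) ⊗ₖ B) * Y) (i,k) (j,k)
      = ∑ q, B k q * Y (i,q) (j,k) := by
    intro k
    rw [Matrix.mul_apply, Fintype.sum_prod_type]
    rw [Finset.sum_eq_single i]
    · simp [kroneckerMap_apply]
    · intro p _ hpi
      simp [kroneckerMap_apply, one_apply, Ne.symm hpi]
    · intro h; exact absurd (Finset.mem_univ i) h
  have hR : ∀ k, (Y * ((1 : Matrix s s ℂ) ⊗ₖ B)) (i,k) (j,k)
      = ∑ q, Y (i,k) (j,q) * B q k := by
    intro k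
    rw [Matrix.mul_apply, Fintype.sum_prod_type]
    rw [Finset.sum_eq_single j]
    · simp [kroneckerMap_apply]
    · intro p _ hpj
      simp [kroneckerMap_apply, one_apply, hpj]
    · intro h; exact absurd (Finset.mem_univ j) h
  simp only [hL, hR]
  rw [Finset.sum_comm]
  exact Finset.sum_congr rfl fun k _ => Finset.sum_congr rfl fun q _ => mul_comm _ _

/-- Main result of Section 4: under the probe calibration condition, the
conventional state-reduction formula (projection postulate applied to the
probe `M`) coincides with the new formula making no reference to the probe. -/
theorem conventional_formula_equals_new_formula
    {s a ι : Type*} [Fintype s] [Fintype a] [DecidableEq s] [DecidableEq a]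
    [Nonempty s] [Nonempty a] [Fintype ι]
    (U : Matrix (s × a) (s × a) ℂ)
    (hU : U * Uᴴ = 1 ∧ Uᴴ * U = 1)
    (σ : Matrix a a ℂ) (hσ_pos : σ.PosSemidef) (hσ_tr : σ.trace = 1)
    (E : ι → Matrix s s ℂ)
    (hE_herm : ∀ i, (E i).IsHermitian)
    (hE_idem : ∀ i, E i * E i = E i)
    (hE_orth : ∀ i j, i ≠ j → E i * E j = 0)
    (hE_sum : ∑ i, E i = 1)
    (M : ι → Matrix a a ℂ)
    (hM_herm : ∀ i, (M i).IsHermitian)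
    (hM_idem : ∀ i, M i * M i = M i)
    (hM_orth : ∀ i j, i ≠ j → M i * M j = 0)
    (hM_sum : ∑ i, M i = 1)
    (hcalib : ∀ i, ∀ ρ : Matrix s s ℂ,
      (((1 : Matrix s s ℂ) ⊗ₖ M i) * U * (ρ ⊗ₖ σ) * Uᴴ).trace = (E i * ρ).trace) :
    ∀ i, ∀ ρ : Matrix s s ℂ,
      partialTraceA (((1 : Matrix s s ℂ) ⊗ₖ M i) * U * (ρ ⊗ₖ σ) * Uᴴ
          * ((1 : Matrix s s ℂ) ⊗ₖ M i))
        = partialTraceA (U * ((E i * ρ) ⊗ₖ σ) * Uᴴ) ∧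
      partialTraceA (((1 : Matrix s s ℂ) ⊗ₖ M i) * U * (ρ ⊗ₖ σ) * Uᴴ
          * ((1 : Matrix s s ℂ) ⊗ₖ M i))
        = partialTraceA (U * ((ρ * E i) ⊗ₖ σ) * Uᴴ) ∧
      partialTraceA (((1 : Matrix s s ℂ) ⊗ₖ M i) * U * (ρ ⊗ₖ σ) * Uᴴ
          * ((1 : Matrix s s ℂ) ⊗ₖ M i))
        = partialTraceA (U * ((E i * ρ * E i) ⊗ₖ σ) * Uᴴ) := by
  -- notation
  set S := (open scoped MatrixOrder in CFC.sqrt σ) with hS_def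
  have hS_herm : Sᴴ = S := by
    open scoped MatrixOrder in exact (CFC.sqrt_nonneg σ).posSemidef.isHermitian
  have hS_mul : S * S = σ := by
    open scoped MatrixOrder in exact CFC.sqrt_mul_sqrt_self σ hσ_pos.nonneg
  have hMkron_herm : ∀ i, ((1 : Matrix s s ℂ) ⊗ₖ M i)ᴴ = (1 : Matrix s s ℂ) ⊗ₖ M i := by
    intro i
    rw [kron_conjTranspose, conjTranspose_one, (hM_herm i).eq]
  have hMkron_idem : ∀ i, ((1 : Matrix s s ℂ) ⊗ₖ M i) * ((1 : Matrix s s ℂ) ⊗ₖ M i)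
      = (1 : Matrix s s ℂ) ⊗ₖ M i := by
    intro i
    rw [← mul_kronecker_mul, one_mul, hM_idem]
  -- Step 1: the key vanishing fact
  have key_zero : ∀ i j, i ≠ j →
      ((1 : Matrix s s ℂ) ⊗ₖ M i) * U * (E j ⊗ₖ σ) = 0 := by
    intro i j hij
    set A := ((1 : Matrix s s ℂ) ⊗ₖ M i) * U with hA_def
    set C := E j ⊗ₖ S with hC_def
    have hC_herm : Cᴴ = C := by rw [hC_def, kron_conjTranspose, (hE_herm j).eq, hS_herm]
    have hCC : C * C = E j ⊗ₖ σ := by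
      rw [hC_def, ← mul_kronecker_mul, hE_idem, hS_mul]
    set D := C * Aᴴ with hD_def
    have hD_tr : (Dᴴ * D).trace = 0 := by
      have h1 : Dᴴ * D = A * (E j ⊗ₖ σ) * Aᴴ := by
        rw [hD_def, conjTranspose_mul, conjTranspose_conjTranspose, hC_herm, ← hCC]
        noncomm_ring
      have h2 : (A * (E j ⊗ₖ σ) * Aᴴ).trace
          = (((1 : Matrix s s ℂ) ⊗ₖ M i) * U * (E j ⊗ₖ σ) * Uᴴ).trace := by
        rw [hA_def, conjTranspose_mul, hMkron_herm]
        rw [show ((1 : Matrix s s ℂ) ⊗ₖ M i) * U * (E j ⊗ₖ σ) * (Uᴴ * ((1:Matrix s s ℂ) ⊗ₖ M i))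
            = (((1 : Matrix s s ℂ) ⊗ₖ M i) * U * (E j ⊗ₖ σ) * Uᴴ) * ((1:Matrix s s ℂ) ⊗ₖ M i)
            by noncomm_ring]
        rw [Matrix.trace_mul_comm]
        rw [show ((1:Matrix s s ℂ) ⊗ₖ M i) * (((1 : Matrix s s ℂ) ⊗ₖ M i) * U * (E j ⊗ₖ σ) * Uᴴ)
            = (((1:Matrix s s ℂ) ⊗ₖ M i) * ((1 : Matrix s s ℂ) ⊗ₖ M i)) * U * (E j ⊗ₖ σ) * Uᴴ
            by noncomm_ring]
        rw [hMkron_idem]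
      rw [h1, h2, hcalib i (E j), hE_orth i j hij, Matrix.trace_zero]
    have hD0 : D = 0 := eq_zero_of_trace_conjTranspose_mul_self hD_tr
    have : A * (E j ⊗ₖ σ) = Dᴴ * C := by
      rw [hD_def, conjTranspose_mul, conjTranspose_conjTranspose, hC_herm, ← hCC]
      noncomm_ring
    rw [hA_def] at this
    rw [this, hD0, conjTranspose_zero, Matrix.zero_mul]
  -- vanishing for products E j * ρ
  have key_zero' : ∀ i j (ρ : Matrix s s ℂ), i ≠ j →
      ((1 : Matrix s s ℂ) ⊗ₖ M i) * U * ((E j * ρ) ⊗ₖ σ) = 0 := by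
    intro i j ρ hij
    have hfac : (E j * ρ) ⊗ₖ σ = (E j ⊗ₖ σ) * ((E j * ρ) ⊗ₖ (1 : Matrix a a ℂ)) := by
      rw [← mul_kronecker_mul, mul_one]
      rw [show E j * (E j * ρ) = (E j * E j) * ρ by noncomm_ring, hE_idem]
    rw [hfac, ← Matrix.mul_assoc, key_zero i j hij, Matrix.zero_mul]
  -- Step 2: master identity
  have master : ∀ i (ρ : Matrix s s ℂ),
      ((1 : Matrix s s ℂ) ⊗ₖ M i) * U * (ρ ⊗ₖ σ) = U * ((E i * ρ) ⊗ₖ σ) := by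
    intro i ρ
    have lhs_eq : ((1 : Matrix s s ℂ) ⊗ₖ M i) * U * (ρ ⊗ₖ σ)
        = ((1 : Matrix s s ℂ) ⊗ₖ M i) * U * ((E i * ρ) ⊗ₖ σ) := by
      have hρ : ρ ⊗ₖ σ = ∑ j, ((E j * ρ) ⊗ₖ σ) := by
        rw [← sum_kron, ← Finset.sum_mul, hE_sum, Matrix.one_mul]
      rw [hρ, Finset.mul_sum]
      rw [Finset.sum_eq_single i]
      · intro j _ hji
        exact key_zero' i j ρ (Ne.symm hji)
      · intro h; exact absurd (Finset.mem_univ i) h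
    have rhs_eq : U * ((E i * ρ) ⊗ₖ σ)
        = ((1 : Matrix s s ℂ) ⊗ₖ M i) * U * ((E i * ρ) ⊗ₖ σ) := by
      have hone : (1 : Matrix (s × a) (s × a) ℂ) = ∑ j, (1 : Matrix s s ℂ) ⊗ₖ M j := by
        rw [← one_kronecker_one (α := ℂ) (m := s) (n := a), ← hM_sum]
        ext ⟨i, k⟩ ⟨j, l⟩
        simp [kroneckerMap_apply, Matrix.sum_apply, Finset.mul_sum]
      conv_lhs => rw [show U * ((E i * ρ) ⊗ₖ σ)
        = (1 : Matrix (s × a) (s × a) ℂ) * (U * ((E i * ρ) ⊗ₖ σ)) by rw [Matrix.one_mul]]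
      rw [hone, Finset.sum_mul]
      rw [Finset.sum_eq_single i]
      · rw [Matrix.mul_assoc]
      · intro j _ hji
        rw [← Matrix.mul_assoc]
        exact key_zero' j i ρ hji
      · intro h; exact absurd (Finset.mem_univ i) h
    rw [lhs_eq, rhs_eq]
  -- Step 3: adjoint version
  have masterH : ∀ i (ρ : Matrix s s ℂ),
      (ρ ⊗ₖ σ) * Uᴴ * ((1 : Matrix s s ℂ) ⊗ₖ M i) = ((ρ * E i) ⊗ₖ σ) * Uᴴ := by
    intro i ρ
    have h := congrArg Matrix.conjTranspose (master i ρᴴ)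
    simp only [conjTranspose_mul, kron_conjTranspose, conjTranspose_conjTranspose,
      conjTranspose_one, hσ_pos.isHermitian.eq, (hE_herm i).eq, (hM_herm i).eq] at h
    rw [Matrix.mul_assoc]
    exact h
  -- conclusion
  intro i ρ
  set X := U * (ρ ⊗ₖ σ) * Uᴴ with hX_def
  have hLX : ((1 : Matrix s s ℂ) ⊗ₖ M i) * U * (ρ ⊗ₖ σ) * Uᴴ
      = ((1 : Matrix s s ℂ) ⊗ₖ M i) * X := by rw [hX_def]; noncomm_ring
  have hMX : ((1 : Matrix s s ℂ) ⊗ₖ M i) * X = U * ((E i * ρ) ⊗ₖ σ) * Uᴴ := by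
    rw [hX_def, show ((1 : Matrix s s ℂ) ⊗ₖ M i) * (U * (ρ ⊗ₖ σ) * Uᴴ)
      = (((1 : Matrix s s ℂ) ⊗ₖ M i) * U * (ρ ⊗ₖ σ)) * Uᴴ by noncomm_ring, master i ρ]
  have hXM : X * ((1 : Matrix s s ℂ) ⊗ₖ M i) = U * ((ρ * E i) ⊗ₖ σ) * Uᴴ := by
    rw [hX_def, show U * (ρ ⊗ₖ σ) * Uᴴ * ((1 : Matrix s s ℂ) ⊗ₖ M i)
      = U * ((ρ ⊗ₖ σ) * Uᴴ * ((1 : Matrix s s ℂ) ⊗ₖ M i)) by noncomm_ring, masterH i ρ]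
    noncomm_ring
  -- the sandwiched matrix
  have hsand : ((1 : Matrix s s ℂ) ⊗ₖ M i) * U * (ρ ⊗ₖ σ) * Uᴴ * ((1 : Matrix s s ℂ) ⊗ₖ M i)
      = U * ((E i * ρ * E i) ⊗ₖ σ) * Uᴴ := by
    rw [hLX, Matrix.mul_assoc, hXM]
    rw [show ((1 : Matrix s s ℂ) ⊗ₖ M i) * (U * ((ρ * E i) ⊗ₖ σ) * Uᴴ)
      = (((1 : Matrix s s ℂ) ⊗ₖ M i) * U * ((ρ * E i) ⊗ₖ σ)) * Uᴴ by noncomm_ring,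
      master i (ρ * E i), ← Matrix.mul_assoc (E i) ρ (E i)]
  refine ⟨?_, ?_, ?_⟩
  · -- first: reduce the sandwich to one factor via the partial-trace trick
    have h1 : partialTraceA (((1 : Matrix s s ℂ) ⊗ₖ M i) * U * (ρ ⊗ₖ σ) * Uᴴ
        * ((1 : Matrix s s ℂ) ⊗ₖ M i)) = partialTraceA (((1 : Matrix s s ℂ) ⊗ₖ M i) * X) := by
      rw [hLX,
        ← partialTraceA_one_kron_mul (M i) (((1 : Matrix s s ℂ) ⊗ₖ M i) * X),
        ← Matrix.mul_assoc, hMkron_idem i]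
    rw [h1, hMX]
  · have h1 : partialTraceA (((1 : Matrix s s ℂ) ⊗ₖ M i) * U * (ρ ⊗ₖ σ) * Uᴴ
        * ((1 : Matrix s s ℂ) ⊗ₖ M i)) = partialTraceA (X * ((1 : Matrix s s ℂ) ⊗ₖ M i)) := by
      rw [hLX, Matrix.mul_assoc, partialTraceA_one_kron_mul (M i) (X * ((1 : Matrix s s ℂ) ⊗ₖ M i)),
        Matrix.mul_assoc, hMkron_idem i]
    rw [h1, hXM]
  · rw [hsand]
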